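/- Neighboring safe states of the TA-SCL Markov chain are mutually accessible: if s is a safe state (i.e., β_d < s ≤ β_n·ζ + β_d) and s + 1 is also a safe state (i.e., s + 1 ≤ β_n·ζ + β_d), then there exist integers k ≥ 1 and k' ≥ 1 such that the (s, s+1) entry of P^k and the (s+1, s) entry of P^{k'} are both strictly positive. -/

import Mathlib

/-- Transition matrix of the TA-SCL Markov chain with parameters `βn`, `βd`
(speed gain `βn/βd`), buffer size `ζ`, and small-decoder block error rate `ε`.
States are `0, 1, …, S` where `S = βn*ζ + βn`. -/
def tasclP (βn βd ζ : ℕ) (ε : ℝ) :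
    Matrix (Fin (βn * ζ + βn + 1)) (Fin (βn * ζ + βn + 1)) ℝ :=
  fun s j =>
    if (s : ℕ) ≤ βd then
      -- idle state: goes to 0 with prob 1-ε, to βn with prob ε
      (if (j : ℕ) = 0 then 1 - ε else 0) + (if (j : ℕ) = βn then ε else 0)
    else if (s : ℕ) ≤ βn * ζ + βd then
      -- safe state: goes to s-βd with prob 1-ε, to s+βn-βd with prob ε
      (if (j : ℕ) = (s : ℕ) - βd then 1 - ε else 0) +
        (if (j : ℕ) = (s : ℕ) + βn - βd then ε else 0)
    else
      -- hazard state: goes to s-βd with prob 1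
      if (j : ℕ) = (s : ℕ) - βd then 1 else 0


/-!
In a safe state the chain moves up by `βn - βd` or down by `βd`, both with positive probability.
Since `βn - βd` and `βd` are coprime, a net displacement of `+1` or `-1` is a combination
`u (βn - βd) - d βd`. The safe region `(βd, βn ζ + βd]` has width `βn ζ ≥ βn`, room for one up-step
and one down-step, so stepping up whenever that stays safe and down otherwise performs these `u`
up-steps and `d` down-steps without leaving the safe region.
-/

open Relation

theorem Matrix.exists_pow_apply_pos_of_transGen {n R : Type*} [Fintype n] [DecidableEq n]
    [Semiring R] [PartialOrder R] [IsStrictOrderedRing R]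
    {A : Matrix n n R} (hA : ∀ i j, 0 ≤ A i j) {i j : n}
    (h : TransGen (fun i j => 0 < A i j) i j) : ∃ k > 0, 0 < (A ^ k) i j := by
  induction h with
  | single hij => exact ⟨1, one_pos, by rwa [pow_one]⟩
  | @tail b c _ hbc ih =>
    obtain ⟨k, -, hk⟩ := ih
    refine ⟨k + 1, k.succ_pos, ?_⟩
    rw [pow_succ, Matrix.mul_apply]
    exact Finset.sum_pos' (fun l _ => mul_nonneg (Matrix.pow_apply_nonneg hA k i l) (hA l c))
      ⟨b, Finset.mem_univ b, mul_pos hk hbc⟩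

theorem Fin.reflTransGen_mk {n : ℕ} {r : Fin n → Fin n → Prop} {x y : ℕ}
    (h : ReflTransGen (fun x y => ∃ (hx : x < n) (hy : y < n), r ⟨x, hx⟩ ⟨y, hy⟩) x y)
    (hx : x < n) (hy : y < n) : ReflTransGen r ⟨x, hx⟩ ⟨y, hy⟩ := by
  induction h with
  | refl => rfl
  | tail _ hbc ih =>
    obtain ⟨hb, _, hbc⟩ := hbc
    exact (ih hb).tail hbc

theorem Nat.exists_mul_eq_mul_add_one {a b : ℕ} (hab : Nat.Coprime a b) (ha : 0 < a) :
    ∃ u d, u * a = d * b + 1 := by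
  rcases lt_or_ge 1 b with hb | hb
  · obtain ⟨m, -, hm⟩ := Nat.exists_mul_mod_eq_one_of_coprime hab hb
    exact ⟨m, a * m / b, by rw [mul_comm m a, ← hm, Nat.div_add_mod']⟩
  · interval_cases b
    · exact ⟨1, 0, by simpa using Nat.coprime_zero_right a |>.1 hab⟩
    · exact ⟨1, a - 1, by omega⟩

theorem Nat.reflTransGen_of_window {r : ℕ → ℕ → Prop} {a b lo hi : ℕ} (hwidth : lo + a + b ≤ hi)
    (hup : ∀ x, lo < x → x + a ≤ hi → r x (x + a))
    (hdown : ∀ x, lo + b < x → x ≤ hi → r x (x - b))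
    {x y : ℕ} (hx : lo < x ∧ x ≤ hi) (hy : lo < y ∧ y ≤ hi) (u d : ℕ)
    (hxy : y + d * b = x + u * a) : ReflTransGen r x y := by
  induction hn : u + d generalizing u d x with
  | zero =>
    obtain ⟨rfl, rfl⟩ : u = 0 ∧ d = 0 := by omega
    obtain rfl : y = x := by simpa using hxy
    rfl
  | succ n ih =>
    have up (hu : 0 < u) (hxa : x + a ≤ hi) : ReflTransGen r x y := by
      obtain ⟨u, rfl⟩ := Nat.exists_eq_add_one_of_ne_zero hu.ne'
      rw [add_one_mul] at hxy
      exact .head (hup x hx.1 hxa) (ih ⟨by omega, hxa⟩ u d (by omega) (by omega))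
    have down (hd : 0 < d) (hxb : lo + b < x) : ReflTransGen r x y := by
      obtain ⟨d, rfl⟩ := Nat.exists_eq_add_one_of_ne_zero hd.ne'
      rw [add_one_mul] at hxy
      exact .head (hdown x hxb hx.2) (ih ⟨by omega, by omega⟩ u d (by omega) (by omega))
    -- Step up whenever possible; otherwise the window is wide enough for a step down.
    rcases Nat.eq_zero_or_pos u with rfl | hu
    · have hd : 0 < d := by omega
      have := Nat.le_mul_of_pos_left b hd
      exact down hd (by omega)
    by_cases hxa : x + a ≤ hi
    · exact up hu hxa
    · have := Nat.le_mul_of_pos_left a hu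
      have hd : 0 < d := Nat.pos_of_ne_zero (by rintro rfl; omega)
      exact down hd (by omega)

section TASCL

variable {βn βd ζ : ℕ} {ε : ℝ}

theorem tasclP_nonneg (hε0 : 0 ≤ ε) (hε1 : ε ≤ 1) (i j : Fin (βn * ζ + βn + 1)) :
    0 ≤ tasclP βn βd ζ ε i j := by
  unfold tasclP
  split_ifs <;> linarith

theorem tasclP_pos_down (hβ : βd < βn) (hε1 : ε < 1) {x : ℕ} (hx : βd < x)
    (hx' : x ≤ βn * ζ + βd) (hxN : x < βn * ζ + βn + 1) (hyN : x - βd < βn * ζ + βn + 1) :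
    0 < tasclP βn βd ζ ε ⟨x, hxN⟩ ⟨x - βd, hyN⟩ := by
  simp only [tasclP, if_neg hx.not_ge, if_pos hx', if_neg (show x - βd ≠ x + βn - βd by omega)]
  simpa using hε1

theorem tasclP_pos_up (hβ : βd < βn) (hε0 : 0 < ε) {x : ℕ} (hx : βd < x)
    (hx' : x ≤ βn * ζ + βd) (hxN : x < βn * ζ + βn + 1)
    (hyN : x + (βn - βd) < βn * ζ + βn + 1) :
    0 < tasclP βn βd ζ ε ⟨x, hxN⟩ ⟨x + (βn - βd), hyN⟩ := by
  simp only [tasclP, if_neg hx.not_ge, if_pos hx', if_neg (show x + (βn - βd) ≠ x - βd by omega),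
    if_pos (show x + (βn - βd) = x + βn - βd by omega)]
  simpa using hε0

theorem tasclP_exists_pow_pos (hβ : βd < βn) (hε0 : 0 < ε) (hε1 : ε < 1) {x y : ℕ}
    (hx : βd < x ∧ x ≤ βn * ζ + βd) (hy : βd < y ∧ y ≤ βn * ζ + βd) (hne : x ≠ y)
    (hxN : x < βn * ζ + βn + 1) (hyN : y < βn * ζ + βn + 1) (u d : ℕ)
    (hxy : y + d * βd = x + u * (βn - βd)) :
    ∃ k > 0, 0 < (tasclP βn βd ζ ε ^ k) ⟨x, hxN⟩ ⟨y, hyN⟩ := by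
  have hwide : βn ≤ βn * ζ := Nat.le_mul_of_pos_right βn (Nat.pos_of_ne_zero (by rintro rfl; omega))
  have hwalk := Nat.reflTransGen_of_window
    (r := fun x y => ∃ (hx : x < βn * ζ + βn + 1) (hy : y < βn * ζ + βn + 1),
      0 < tasclP βn βd ζ ε ⟨x, hx⟩ ⟨y, hy⟩) (by omega)
    (fun x hx hxa => ⟨by omega, by omega, tasclP_pos_up hβ hε0 hx (by omega) _ _⟩)
    (fun x hxb hx' => ⟨by omega, by omega, tasclP_pos_down hβ hε1 (by omega) hx' _ _⟩)
    hx hy u d hxy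
  refine Matrix.exists_pow_apply_pos_of_transGen (tasclP_nonneg hε0.le hε1.le) ?_
  refine (reflTransGen_iff_eq_or_transGen.1 (Fin.reflTransGen_mk hwalk hxN hyN)).resolve_left ?_
  exact fun h => hne (Fin.mk.inj h).symm

end TASCL

theorem tascl_safe_neighbors_accessible_general (βn βd ζ : ℕ) (hβd : 0 < βd) (hβ : βd < βn)
    (hcop : Nat.Coprime βn βd) (ε : ℝ) (hε0 : 0 < ε) (hε1 : ε < 1)
    (s : ℕ) (hs1 : βd < s) (hs2 : s + 1 ≤ βn * ζ + βd)
    (h : s < βn * ζ + βn + 1) (h' : s + 1 < βn * ζ + βn + 1) :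
    (∃ k : ℕ, 1 ≤ k ∧
      0 < (tasclP βn βd ζ ε ^ k) ⟨s, h⟩ ⟨s + 1, h'⟩) ∧
    (∃ k' : ℕ, 1 ≤ k' ∧
      0 < (tasclP βn βd ζ ε ^ k') ⟨s + 1, h'⟩ ⟨s, h⟩) := by
  have hcop' : Nat.Coprime (βn - βd) βd := (Nat.coprime_sub_self_left hβ.le).2 hcop
  obtain ⟨u, d, hup⟩ := Nat.exists_mul_eq_mul_add_one hcop' (Nat.sub_pos_of_lt hβ)
  obtain ⟨d', u', hdown⟩ := Nat.exists_mul_eq_mul_add_one hcop'.symm hβd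
  exact ⟨tasclP_exists_pow_pos hβ hε0 hε1 ⟨hs1, by omega⟩ ⟨by omega, hs2⟩ (by omega) h h' u d
      (by omega),
    tasclP_exists_pow_pos hβ hε0 hε1 ⟨by omega, hs2⟩ ⟨hs1, by omega⟩ (by omega) h' h u' d'
      (by omega)⟩

/-- Neighbouring safe states of the TA-SCL Markov chain are mutually accessible:
if `s` and `s+1` are both safe states, then one can reach `s+1` from `s` and
`s` from `s+1` in finitely many steps with positive probability. -/
theorem tascl_safe_neighbors_accessible (βn βd ζ : ℕ) (hβd : 0 < βd) (hβ : βd < βn)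
    (hcop : Nat.Coprime βn βd) (hζ : 0 < ζ) (ε : ℝ) (hε0 : 0 < ε) (hε1 : ε < 1)
    (s : ℕ) (hs1 : βd < s) (hs2 : s + 1 ≤ βn * ζ + βd)
    (h : s < βn * ζ + βn + 1) (h' : s + 1 < βn * ζ + βn + 1) :
    (∃ k : ℕ, 1 ≤ k ∧
      0 < (tasclP βn βd ζ ε ^ k) ⟨s, h⟩ ⟨s + 1, h'⟩) ∧
    (∃ k' : ℕ, 1 ≤ k' ∧
      0 < (tasclP βn βd ζ ε ^ k') ⟨s + 1, h'⟩ ⟨s, h⟩) :=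
  tascl_safe_neighbors_accessible_general βn βd ζ hβd hβ hcop ε hε0 hε1 s hs1 hs2 h h'
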